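/- Let h ∈ C²([0,∞)) be positive and decreasing with h(t) = (1/2)exp(−λ(√t − √(2z₀))) for t ≥ 2z₀ and h(t)=1 for t ≤ z₀, where λ > 0 and z₀ > 0 is chosen so that H(x) ≥ z₀ implies H(x) ≥ a₁|x|². Define γ^∨(x) = h(H(x)). Then there exists a constant c > 0 such that Δγ^∨(x) ≤ c γ^∨(x) for all x ∈ ℝ². -/

import Mathlib

/-!
Split the plane according to the value of `H`. Where `H < z₀`, `γ^∨ = h ∘ H` is locally `1`,
so `Δγ^∨ = 0`. Where `z₀ ≤ H ≤ 2z₀`, the quadratic growth of `H` confines `x` to a fixed ball,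
on which the continuous function `Δγ^∨` is bounded, while `γ^∨ ≥ h(2z₀) > 0` since `h` decreases.
Where `H > 2z₀`, `γ^∨ = φ ∘ H` near `x` for the explicit profile `φ`, and the chain rule
`Δ(φ ∘ H) = φ'(H) ΔH + φ''(H) |∇H|²` combines with `|ΔH| ≤ C`, `|∇H|² ≤ C²|x|² ≤ (C²/a₁) H`,
`|φ'(t)| ≤ λ/(2√t) φ(t)` and `t φ''(t) = (λ/4)(λ + 1/√t) φ(t)` into `Δγ^∨ ≤ c φ(H)`.
-/

open MeasureTheory

/-- The Laplacian of `f : ℝ² → ℝ`, as the trace of the second derivative. -/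
noncomputable def lapE (f : EuclideanSpace ℝ (Fin 2) → ℝ) (x : EuclideanSpace ℝ (Fin 2)) : ℝ :=
  ∑ i : Fin 2,
    iteratedFDeriv ℝ 2 f x ![EuclideanSpace.single i 1, EuclideanSpace.single i 1]

open Filter Topology

theorem Filter.EventuallyEq.lapE_eq {f g : EuclideanSpace ℝ (Fin 2) → ℝ} {x}
    (hfg : f =ᶠ[𝓝 x] g) : lapE f x = lapE g x := by
  simp only [lapE, (hfg.iteratedFDeriv ℝ 2).eq_of_nhds]

theorem lapE_comp_congr {H : EuclideanSpace ℝ (Fin 2) → ℝ} {x} {f g : ℝ → ℝ}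
    (hH : ContinuousAt H x) (hfg : f =ᶠ[𝓝 (H x)] g) :
    lapE (fun y => f (H y)) x = lapE (fun y => g (H y)) x :=
  (hfg.comp_tendsto hH.tendsto).lapE_eq

theorem lapE_const (c : ℝ) (x : EuclideanSpace ℝ (Fin 2)) : lapE (fun _ => c) x = 0 := by
  simp [lapE, iteratedFDeriv_const_of_ne two_ne_zero]

theorem continuous_lapE {f : EuclideanSpace ℝ (Fin 2) → ℝ} (hf : ContDiff ℝ 2 f) :
    Continuous (lapE f) :=
  continuous_finsetSum _ fun _ _ =>
    (hf.continuous_iteratedFDeriv le_rfl).eval_const _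

theorem exists_lapE_le_of_norm_le {f : EuclideanSpace ℝ (Fin 2) → ℝ} (hf : ContDiff ℝ 2 f)
    (R : ℝ) : ∃ M, 0 ≤ M ∧ ∀ x, ‖x‖ ≤ R → lapE f x ≤ M := by
  obtain ⟨M, hM⟩ := (isCompact_closedBall 0 R).bddAbove_image (continuous_lapE hf).continuousOn
  exact ⟨max M 0, le_max_right _ _,
    fun x hx => (hM ⟨x, by simpa using hx, rfl⟩).trans (le_max_left _ _)⟩

theorem EuclideanSpace.norm_sq_eq_sum_sq_apply_single {ι : Type*} [Fintype ι] [DecidableEq ι]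
    (L : EuclideanSpace ℝ ι →L[ℝ] ℝ) :
    ‖L‖ ^ 2 = ∑ i, L (EuclideanSpace.single i 1) ^ 2 := by
  set u := (InnerProductSpace.toDual ℝ (EuclideanSpace ℝ ι)).symm L
  have hL : L = InnerProductSpace.toDual ℝ _ u := by simp [u]
  rw [hL, LinearIsometryEquiv.norm_map, EuclideanSpace.real_norm_sq_eq]
  simp [EuclideanSpace.inner_single_right]

theorem fderiv_fderiv_comp_apply {E : Type*} [NormedAddCommGroup E] [NormedSpace ℝ E]
    {f f' : ℝ → ℝ} {f'' : ℝ} {H : E → ℝ} {x : E}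
    (hf : ∀ᶠ t in 𝓝 (H x), HasDerivAt f (f' t) t) (hf' : HasDerivAt f' f'' (H x))
    (hH : ContDiffAt ℝ 2 H x) (v w : E) :
    fderiv ℝ (fderiv ℝ (fun y => f (H y))) x v w =
      f' (H x) * fderiv ℝ (fderiv ℝ H) x v w + f'' * (fderiv ℝ H x v * fderiv ℝ H x w) := by
  have hdiff : ∀ᶠ y in 𝓝 x, DifferentiableAt ℝ H y :=
    (hH.eventually (by simp)).mono fun y hy => hy.differentiableAt two_ne_zero
  have hD : fderiv ℝ (fun y => f (H y)) =ᶠ[𝓝 x] fun y => f' (H y) • fderiv ℝ H y := by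
    filter_upwards [hdiff, hH.continuousAt.tendsto.eventually hf] with y hy hfy
    exact (hfy.comp_hasFDerivAt y hy.hasFDerivAt).fderiv
  have hD2 : HasFDerivAt (fun y => f' (H y) • fderiv ℝ H y)
      (f' (H x) • fderiv ℝ (fderiv ℝ H) x + (f'' • fderiv ℝ H x).smulRight (fderiv ℝ H x)) x :=
    (hf'.comp_hasFDerivAt x (hH.differentiableAt two_ne_zero).hasFDerivAt).smul
      ((hH.fderiv_right le_rfl).differentiableAt one_ne_zero).hasFDerivAt
  rw [hD.fderiv_eq, hD2.fderiv]
  simp only [add_apply, smul_apply, ContinuousLinearMap.smulRight_apply, smul_eq_mul]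
  ring

theorem lapE_comp {f f' : ℝ → ℝ} {f'' : ℝ} {H : EuclideanSpace ℝ (Fin 2) → ℝ} {x}
    (hf : ∀ᶠ t in 𝓝 (H x), HasDerivAt f (f' t) t) (hf' : HasDerivAt f' f'' (H x))
    (hH : ContDiffAt ℝ 2 H x) :
    lapE (fun y => f (H y)) x = f' (H x) * lapE H x + f'' * ‖fderiv ℝ H x‖ ^ 2 := by
  simp only [lapE, iteratedFDeriv_two_apply, EuclideanSpace.norm_sq_eq_sum_sq_apply_single,
    fderiv_fderiv_comp_apply hf hf' hH, Finset.mul_sum, ← Finset.sum_add_distrib]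
  simp [sq]

/-- On `[2z₀, ∞)`, `h` is `expProfile λ √(2z₀)`. -/
noncomputable def expProfile (lam s t : ℝ) : ℝ :=
  (1/2) * Real.exp (-(lam * (Real.sqrt t - s)))

noncomputable def expProfileDeriv (lam s t : ℝ) : ℝ :=
  -(lam / (2 * Real.sqrt t)) * expProfile lam s t

noncomputable def expProfileDeriv2 (lam s t : ℝ) : ℝ :=
  lam / (4 * t) * (lam + 1 / Real.sqrt t) * expProfile lam s t

theorem expProfile_pos (lam s t : ℝ) : 0 < expProfile lam s t := by
  unfold expProfile; positivity

theorem hasDerivAt_expProfile (lam s : ℝ) {t : ℝ} (ht : 0 < t) :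
    HasDerivAt (expProfile lam s) (expProfileDeriv lam s t) t := by
  refine ((((Real.hasDerivAt_sqrt ht.ne').sub_const s).const_mul lam).neg.exp.const_mul
    (1/2 : ℝ)).congr_deriv ?_
  simp only [expProfileDeriv, expProfile, Pi.neg_apply]
  ring

theorem hasDerivAt_expProfileDeriv (lam s : ℝ) {t : ℝ} (ht : 0 < t) :
    HasDerivAt (expProfileDeriv lam s) (expProfileDeriv2 lam s t) t := by
  have hfun : expProfileDeriv lam s = fun u => -lam * (2 * Real.sqrt u)⁻¹ * expProfile lam s u := by
    funext u; unfold expProfileDeriv; ring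
  rw [hfun]
  refine ((((Real.hasDerivAt_sqrt ht.ne').const_mul 2).inv (by positivity)).const_mul
    (-lam) |>.mul (hasDerivAt_expProfile lam s ht)).congr_deriv ?_
  simp only [expProfileDeriv2, expProfileDeriv, Pi.inv_apply]
  have hsq : Real.sqrt t ^ 2 = t := Real.sq_sqrt ht.le
  field_simp
  rw [hsq]
  ring

theorem expProfileDeriv_mul_le {lam s t a C : ℝ} (hlam : 0 ≤ lam) (hs : 0 < s)
    (hst : s ≤ Real.sqrt t) (ha : |a| ≤ C) :
    expProfileDeriv lam s t * a ≤ lam * C / (2 * s) * expProfile lam s t := by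
  have hφ := expProfile_pos lam s t
  calc expProfileDeriv lam s t * a = lam / (2 * Real.sqrt t) * expProfile lam s t * -a := by
        unfold expProfileDeriv; ring
    _ ≤ lam / (2 * Real.sqrt t) * expProfile lam s t * C := by
        gcongr; exact (neg_le_abs a).trans ha
    _ ≤ lam / (2 * s) * expProfile lam s t * C := by
        gcongr; exact (abs_nonneg a).trans ha
    _ = lam * C / (2 * s) * expProfile lam s t := by ring

theorem expProfileDeriv2_mul_le {lam s t b K : ℝ} (hlam : 0 ≤ lam) (hs : 0 < s)
    (hst : s ≤ Real.sqrt t) (hb : 0 ≤ b) (hbt : b ≤ K * t) :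
    expProfileDeriv2 lam s t * b ≤ K * lam / 4 * (lam + 1 / s) * expProfile lam s t := by
  have ht : 0 < t := Real.sqrt_pos.mp (hs.trans_le hst)
  have hK : 0 ≤ K := nonneg_of_mul_nonneg_left (hb.trans hbt) ht
  have hφ := expProfile_pos lam s t
  calc expProfileDeriv2 lam s t * b ≤ expProfileDeriv2 lam s t * (K * t) := by
        gcongr; unfold expProfileDeriv2; positivity
    _ = K * lam / 4 * (lam + 1 / Real.sqrt t) * expProfile lam s t := by
        unfold expProfileDeriv2; field_simp
    _ ≤ K * lam / 4 * (lam + 1 / s) * expProfile lam s t := by gcongr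

theorem lapE_comp_expProfile_le {H : EuclideanSpace ℝ (Fin 2) → ℝ} {x} {lam s C K : ℝ}
    (hH : ContDiffAt ℝ 2 H x) (hlam : 0 ≤ lam) (hs : 0 < s) (hsH : s ≤ Real.sqrt (H x))
    (hlap : |lapE H x| ≤ C) (hgrad : ‖fderiv ℝ H x‖ ^ 2 ≤ K * H x) :
    lapE (fun y => expProfile lam s (H y)) x ≤
      (lam * C / (2 * s) + K * lam / 4 * (lam + 1 / s)) * expProfile lam s (H x) := by
  have hHx : 0 < H x := Real.sqrt_pos.mp (hs.trans_le hsH)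
  have hderiv : ∀ᶠ t in 𝓝 (H x), HasDerivAt (expProfile lam s) (expProfileDeriv lam s t) t :=
    (eventually_gt_nhds hHx).mono fun t ht => hasDerivAt_expProfile lam s ht
  rw [lapE_comp hderiv (hasDerivAt_expProfileDeriv lam s hHx) hH, add_mul]
  exact add_le_add (expProfileDeriv_mul_le hlam hs hsH hlap)
    (expProfileDeriv2_mul_le hlam hs hsH (sq_nonneg _) hgrad)

/-- for `h ∈ C²([0,∞))` positive decreasing, equal to `1` on `(-∞, z₀]` and
to `(1/2)exp(−λ(√t − √(2z₀)))` on `[2z₀,∞)`, and `γ^∨ = h ∘ H`, there is `c > 0` with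
`Δγ^∨ ≤ c γ^∨` everywhere. -/
theorem stmt_5
    (H : EuclideanSpace ℝ (Fin 2) → ℝ) (hH : ContDiff ℝ 4 H)
    (C a₁ z₀ lam : ℝ) (hC : 0 < C) (ha₁ : 0 < a₁) (hz₀ : 0 < z₀) (hlam : 0 < lam)
    (hHnn : ∀ x, 0 ≤ H x)
    (hgrad : ∀ x, ‖fderiv ℝ H x‖ ≤ C * ‖x‖)
    (hlapH : ∀ x, |lapE H x| ≤ C)
    (hquad : ∀ x, z₀ ≤ H x → a₁ * ‖x‖^2 ≤ H x)
    (h : ℝ → ℝ) (hh : ContDiffOn ℝ 2 h (Set.Ici 0))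
    (hpos : ∀ t, 0 ≤ t → 0 < h t) (hdec : AntitoneOn h (Set.Ici 0))
    (hform : ∀ t, 2 * z₀ ≤ t →
      h t = (1/2) * Real.exp (-(lam * (Real.sqrt t - Real.sqrt (2 * z₀)))))
    (hone : ∀ t, t ≤ z₀ → h t = 1) :
    ∃ c > 0, ∀ x, lapE (fun y => h (H y)) x ≤ c * h (H x) := by
  set s := Real.sqrt (2 * z₀)
  have hs : 0 < s := Real.sqrt_pos.mpr (by positivity)
  have hγ : ContDiff ℝ 2 (fun y => h (H y)) :=
    hh.comp_contDiff (hH.of_le (by norm_num)) fun y => hHnn y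
  obtain ⟨M, hM₀, hM⟩ := exists_lapE_le_of_norm_le hγ (Real.sqrt (2 * z₀ / a₁))
  have h2z₀ : 0 < h (2 * z₀) := hpos _ (by positivity)
  set c₃ := lam * C / (2 * s) + C ^ 2 / a₁ * lam / 4 * (lam + 1 / s)
  have hc₃ : 0 < c₃ := by positivity
  refine ⟨max (M / h (2 * z₀)) c₃, lt_max_of_lt_right hc₃, fun x => ?_⟩
  have hHx : ContinuousAt H x := hH.continuous.continuousAt
  rcases lt_or_ge (H x) z₀ with hlow | hmid
  · rw [lapE_comp_congr hHx ((eventually_lt_nhds hlow).mono fun t ht => hone t ht.le),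
      lapE_const, hone _ hlow.le, mul_one]
    exact (lt_max_of_lt_right hc₃).le
  rcases le_or_gt (H x) (2 * z₀) with hle | hhigh
  · have hxR : ‖x‖ ≤ Real.sqrt (2 * z₀ / a₁) := by
      rw [Real.le_sqrt (norm_nonneg x) (by positivity), le_div_iff₀ ha₁]
      linarith [hquad x hmid]
    calc lapE (fun y => h (H y)) x ≤ M := hM x hxR
      _ ≤ M / h (2 * z₀) * h (H x) := by
          rw [div_mul_eq_mul_div, le_div_iff₀ h2z₀]
          exact mul_le_mul_of_nonneg_left (hdec (hHnn x) (by simp [hz₀.le]) hle) hM₀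
      _ ≤ _ := mul_le_mul_of_nonneg_right (le_max_left _ _) (hpos _ (hHnn x)).le
  · have hgradx : ‖fderiv ℝ H x‖ ^ 2 ≤ C ^ 2 / a₁ * H x := calc
      ‖fderiv ℝ H x‖ ^ 2 ≤ (C * ‖x‖) ^ 2 := by gcongr; exact hgrad x
      _ = C ^ 2 / a₁ * (a₁ * ‖x‖ ^ 2) := by field_simp
      _ ≤ C ^ 2 / a₁ * H x := by gcongr; exact hquad x (by linarith)
    rw [lapE_comp_congr hHx ((eventually_gt_nhds hhigh).mono fun t ht => hform t ht.le),
      hform _ hhigh.le]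
    calc _ ≤ c₃ * expProfile lam s (H x) :=
          lapE_comp_expProfile_le (hH.contDiffAt.of_le (by norm_num)) hlam.le hs
            (Real.sqrt_le_sqrt hhigh.le) (hlapH x) hgradx
      _ ≤ _ := mul_le_mul_of_nonneg_right (le_max_right _ _) (expProfile_pos _ _ _).le
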